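/- For f(x) = (x-c)^p g(x) with natural p ≥ 1, g differentiable, g(x_k) ≠ 0, and denominator p·g(x_k) - e(x_k)·g'(x_k) ≠ 0, the error of one step x_{k+1} = x_k + p_k·w_{k+1} (where w_{k+1} = -f(x_k)/f'(x_k), p_k ∈ ℝ, e(x) = c - x) satisfies e(x_{k+1}) = e(x_k)·(1 - p_k·g(x_k)/(p·g(x_k) - e(x_k)·g'(x_k))). -/

import Mathlib

/-! Writing `f x = (x - c) ^ p * g x`, the product rule gives
`f' x = (x - c) ^ (p - 1) * (p * g x + (x - c) * g' x)`, so the Newton quotient is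
`f x / f' x = (x - c) * g x / (p * g x + (x - c) * g' x)` once the common factor
`(x - c) ^ (p - 1)` is cancelled; the error identity is then a ring identity. -/

theorem hasDerivAt_sub_pow_succ_mul {g : ℝ → ℝ} {g' x : ℝ} (c : ℝ) (n : ℕ)
    (hg : HasDerivAt g g' x) :
    HasDerivAt (fun y => (y - c) ^ (n + 1) * g y)
      ((x - c) ^ n * ((n + 1) * g x + (x - c) * g')) x := by
  have hpow : HasDerivAt (fun y => (y - c) ^ (n + 1)) ((n + 1 : ℕ) * (x - c) ^ n) x := by
    simpa using ((hasDerivAt_id x).sub_const c).fun_pow (n + 1)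
  refine (hpow.fun_mul hg).congr_deriv ?_
  push_cast
  ring

theorem div_deriv_sub_pow_mul {g : ℝ → ℝ} {c x : ℝ} {p : ℕ} (hp : 1 ≤ p) (hx : x ≠ c)
    (hg : DifferentiableAt ℝ g x) :
    (x - c) ^ p * g x / deriv (fun y => (y - c) ^ p * g y) x =
      (x - c) * g x / (p * g x + (x - c) * deriv g x) := by
  obtain ⟨n, rfl⟩ := Nat.exists_eq_add_of_le' hp
  rw [(hasDerivAt_sub_pow_succ_mul c n hg.hasDerivAt).deriv, pow_succ, mul_assoc,
    mul_div_mul_left _ _ (pow_ne_zero n (sub_ne_zero.mpr hx))]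
  push_cast
  rfl

theorem error_identity_generalized_step_general
    (c : ℝ) (p : ℕ) (hp : 1 ≤ p)
    (g : ℝ → ℝ) (hg : Differentiable ℝ g)
    (f : ℝ → ℝ) (hf : ∀ x, f x = (x - c) ^ p * g x)
    (xk pk : ℝ) (hxk : xk ≠ c) :
    c - (xk + pk * (-f xk / deriv f xk)) =
      (c - xk) * (1 - pk * g xk / ((p : ℝ) * g xk - (c - xk) * deriv g xk)) := by
  obtain rfl : f = fun x => (x - c) ^ p * g x := funext hf
  have hden : (p : ℝ) * g xk - (c - xk) * deriv g xk = p * g xk + (xk - c) * deriv g xk := by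
    ring
  rw [neg_div, div_deriv_sub_pow_mul hp hxk (hg xk), hden]
  ring

/-- error identity for one generalized Newton step
x_{k+1} = x_k + p_k · w_{k+1}. -/
theorem error_identity_generalized_step
    (c : ℝ) (p : ℕ) (hp : 1 ≤ p)
    (g : ℝ → ℝ) (hg : Differentiable ℝ g)
    (f : ℝ → ℝ) (hf : ∀ x, f x = (x - c) ^ p * g x)
    (xk pk : ℝ) (hxk : xk ≠ c) (hgxk : g xk ≠ 0)
    (hfd : deriv f xk ≠ 0)
    (hden : (p : ℝ) * g xk - (c - xk) * deriv g xk ≠ 0) :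
    c - (xk + pk * (-f xk / deriv f xk)) =
      (c - xk) * (1 - pk * g xk / ((p : ℝ) * g xk - (c - xk) * deriv g xk)) :=
  error_identity_generalized_step_general c p hp g hg f hf xk pk hxk
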